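/- Let d ≥ 2, N ≥ 2, j ∈ {2,…,N}, and set p_1 = ∑_{k=2}^N d^{N−k}. Suppose i_k, i'_k ∈ {0,…,d−1} for each k ∈ {2,…,N}∖{j} and s, s' ∈ {0,…,d−1} satisfy s·p_1 + ∑_{k∈{2,…,N}∖{j}} i_k·d^{N−k} = s'·p_1 + ∑_{k∈{2,…,N}∖{j}} i'_k·d^{N−k}. Then s = s' and i_k = i'_k for all k ∈ {2,…,N}∖{j}. -/

import Mathlib

/-!
Put `δ = s' - s ≥ 0` (after swapping the two sides). Then
`∑ i_k d^{N-k} = δ·p₁ + ∑ i'_k d^{N-k}`, where the left side has base-`d` digit `0` at the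
missing position `N - j`. Reducing modulo `d^{N-j+1}`, the right side becomes `δ·d^{N-j}` plus
two quantities each below `d^{N-j}`, which rules out `0 < δ < d - 1`; `δ = d - 1` is too large
since the left side is at most `(d - 1)·(p₁ - d^{N-j})`. So `s = s'`, and the `i_k` are then
the base-`d` digits of the same number.
-/

open Finset

namespace Nat

variable {ι : Type*} {d n : ℕ} {S : Finset ι} {w : ι → ℕ}

theorem sum_mul_pow_lt_pow {a : ι → ℕ} (hd : 0 < d) (hw : Set.InjOn w S)
    (ha : ∀ k ∈ S, a k < d) (hwn : ∀ k ∈ S, w k < n) : ∑ k ∈ S, a k * d ^ w k < d ^ n :=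
  calc ∑ k ∈ S, a k * d ^ w k
      ≤ ∑ k ∈ S, (d - 1) * d ^ w k := by
        gcongr with k hk
        exact le_sub_one_of_lt (ha k hk)
    _ = (d - 1) * ∑ e ∈ S.image w, d ^ e := by rw [sum_image hw, mul_sum]
    _ ≤ (d - 1) * ∑ e ∈ range n, d ^ e := by
        gcongr
        intro e he
        obtain ⟨k, hk, rfl⟩ := mem_image.1 he
        exact mem_range.2 (hwn k hk)
    _ = d ^ n - 1 := by rw [mul_comm, geom_sum_mul_of_one_le hd]
    _ < d ^ n := sub_one_lt (pow_pos hd n).ne'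

theorem sum_mul_pow_modEq (c : ι → ℕ) (n : ℕ) :
    ∑ k ∈ S, c k * d ^ w k ≡ ∑ k ∈ S with w k < n, c k * d ^ w k [MOD d ^ n] := by
  rw [← sum_filter_add_sum_filter_not S (fun k => w k < n)]
  refine (Nat.modEq_iff_dvd' (Nat.le_add_right _ _)).2 ?_ |>.symm
  rw [Nat.add_sub_cancel_left]
  refine dvd_sum fun k hk => Dvd.dvd.mul_left (pow_dvd_pow d ?_) _
  exact le_of_not_gt (mem_filter.1 hk).2

variable [DecidableEq ι]

theorem eq_of_sum_mul_pow_eq {a b : ι → ℕ} (hw : Set.InjOn w S)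
    (ha : ∀ k ∈ S, a k < d) (hb : ∀ k ∈ S, b k < d)
    (h : ∑ k ∈ S, a k * d ^ w k = ∑ k ∈ S, b k * d ^ w k) : ∀ k ∈ S, a k = b k := by
  induction S using Finset.induction_on_max_value w with
  | empty => simp
  | insert t S htS hmax ih =>
    have hd : 0 < d := (ha t (mem_insert_self t S)).trans_le' (Nat.zero_le _)
    have hlt : ∀ k ∈ S, w k < w t := fun k hk =>
      (hmax k hk).lt_of_ne fun hkt => htS (hw.eq_iff (mem_insert_of_mem hk)
        (mem_insert_self t S) |>.1 hkt ▸ hk)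
    have hwS : Set.InjOn w S := hw.mono (by simp)
    have lowA := sum_mul_pow_lt_pow hd hwS (fun k hk => ha k (mem_insert_of_mem hk)) hlt
    have lowB := sum_mul_pow_lt_pow hd hwS (fun k hk => hb k (mem_insert_of_mem hk)) hlt
    rw [sum_insert htS, sum_insert htS, add_comm, mul_comm, add_comm (b t * _), mul_comm (b t)] at h
    have hdiv := congrArg (· / d ^ w t) h
    have hmod := congrArg (· % d ^ w t) h
    simp only [add_mul_div_left _ _ (pow_pos hd _), add_mul_mod_self_left, div_eq_of_lt lowA,
      div_eq_of_lt lowB, mod_eq_of_lt lowA, mod_eq_of_lt lowB, zero_add] at hdiv hmod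
    have ihS := ih hwS (fun k hk => ha k (mem_insert_of_mem hk))
      (fun k hk => hb k (mem_insert_of_mem hk)) hmod
    exact (forall_mem_insert _ _ _).2 ⟨hdiv, ihS⟩

theorem sum_erase_mul_pow_add_le {a : ι → ℕ} {t : ι} (ht : t ∈ S)
    (ha : ∀ k ∈ S.erase t, a k < d) :
    ∑ k ∈ S.erase t, a k * d ^ w k + (d - 1) * d ^ w t ≤ (d - 1) * ∑ k ∈ S, d ^ w k := by
  rw [← add_sum_erase S _ ht, mul_add, mul_sum, add_comm]
  gcongr with k hk
  exact le_sub_one_of_lt (ha k hk)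

theorem sum_erase_mul_pow_ne_mul_add {a b : ι → ℕ} {t : ι} {δ : ℕ} (hw : Set.InjOn w S)
    (ht : t ∈ S) (ha : ∀ k ∈ S.erase t, a k < d) (hb : ∀ k ∈ S.erase t, b k < d)
    (hδ : 0 < δ) (hδd : δ + 1 < d) :
    ∑ k ∈ S.erase t, a k * d ^ w k ≠
      δ * ∑ k ∈ S, d ^ w k + ∑ k ∈ S.erase t, b k * d ^ w k := by
  intro h
  set p := w t
  set T := (S.erase t).filter (fun k => w k < p + 1)
  have hd : 0 < d := by omega
  have hTS : ∀ k ∈ T, k ∈ S.erase t := fun k hk => (mem_filter.1 hk).1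
  have hwT : Set.InjOn w T := hw.mono fun k hk => mem_of_mem_erase (hTS k hk)
  have hT : ∀ k ∈ T, w k < p := fun k hk => by
    obtain ⟨hkt, hkS⟩ := mem_erase.1 (hTS k hk)
    exact (le_of_lt_succ (mem_filter.1 hk).2).lt_of_ne fun hkp => hkt (hw hkS ht hkp)
  have lowA := sum_mul_pow_lt_pow hd hwT (fun k hk => ha k (hTS k hk)) hT
  have lowB := sum_mul_pow_lt_pow hd hwT (fun k hk => hb k (hTS k hk)) hT
  have lowG := sum_mul_pow_lt_pow (a := fun _ => δ) hd hwT (fun _ _ => by omega) hT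
  have hmod : ∑ k ∈ T, a k * d ^ w k ≡
      δ * d ^ p + (∑ k ∈ T, δ * d ^ w k + ∑ k ∈ T, b k * d ^ w k) [MOD d ^ (p + 1)] :=
    calc ∑ k ∈ T, a k * d ^ w k
        ≡ ∑ k ∈ S.erase t, a k * d ^ w k [MOD d ^ (p + 1)] := (sum_mul_pow_modEq a _).symm
      _ = δ * d ^ p +
            (∑ k ∈ S.erase t, δ * d ^ w k + ∑ k ∈ S.erase t, b k * d ^ w k) := by
        rw [h, ← add_sum_erase S _ ht, mul_add, mul_sum, add_assoc]
      _ ≡ δ * d ^ p + (∑ k ∈ T, δ * d ^ w k + ∑ k ∈ T, b k * d ^ w k)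
            [MOD d ^ (p + 1)] :=
        ((sum_mul_pow_modEq _ _).add (sum_mul_pow_modEq b _)).add_left _
  have hpow : d ^ (p + 1) = d * d ^ p := _root_.pow_succ' d p
  have hδp : d ^ p ≤ δ * d ^ p := Nat.le_mul_of_pos_left _ hδ
  have hlt : (δ + 2) * d ^ p ≤ d * d ^ p := Nat.mul_le_mul_right _ hδd
  have hlow := hmod.eq_of_lt_of_lt (hpow ▸ lowA.trans_le (Nat.le_mul_of_pos_left _ hd))
    (by rw [hpow]; linarith)
  omega

theorem eq_of_mul_sum_pow_add_eq {a b : ι → ℕ} {t : ι} {s s' : ℕ} (hw : Set.InjOn w S)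
    (ht : t ∈ S) (ha : ∀ k ∈ S.erase t, a k < d) (hb : ∀ k ∈ S.erase t, b k < d)
    (hs' : s' < d) (hss' : s ≤ s')
    (h : s * ∑ k ∈ S, d ^ w k + ∑ k ∈ S.erase t, a k * d ^ w k =
      s' * ∑ k ∈ S, d ^ w k + ∑ k ∈ S.erase t, b k * d ^ w k) : s = s' := by
  obtain ⟨δ, rfl⟩ := exists_add_of_le hss'
  have hA : ∑ k ∈ S.erase t, a k * d ^ w k =
      δ * ∑ k ∈ S, d ^ w k + ∑ k ∈ S.erase t, b k * d ^ w k := by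
    rw [add_mul] at h
    omega
  rcases Nat.eq_zero_or_pos δ with hδ | hδ
  · rw [hδ, add_zero]
  rcases Nat.lt_or_ge (δ + 1) d with hδd | hδd
  · exact absurd hA (sum_erase_mul_pow_ne_mul_add hw ht ha hb hδ hδd)
  · have htop := sum_erase_mul_pow_add_le (w := w) ht ha
    have hδ' : δ = d - 1 := by omega
    have hpos : 0 < (d - 1) * d ^ w t := Nat.mul_pos (by omega) (pow_pos (by omega) _)
    rw [hδ'] at hA
    omega

end Nat

theorem stmt10 (d N j : ℕ) (hj : j ∈ Finset.Icc 2 N)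
    (i i' : ℕ → ℕ)
    (hi : ∀ k ∈ (Finset.Icc 2 N).erase j, i k < d)
    (hi' : ∀ k ∈ (Finset.Icc 2 N).erase j, i' k < d)
    (s s' : ℕ) (hs : s < d) (hs' : s' < d)
    (heq : s * (∑ k ∈ Finset.Icc 2 N, d ^ (N - k)) +
            ∑ k ∈ (Finset.Icc 2 N).erase j, i k * d ^ (N - k)
        = s' * (∑ k ∈ Finset.Icc 2 N, d ^ (N - k)) +
            ∑ k ∈ (Finset.Icc 2 N).erase j, i' k * d ^ (N - k)) :
    s = s' ∧ ∀ k ∈ (Finset.Icc 2 N).erase j, i k = i' k := by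
  have hw : Set.InjOn (N - ·) (Finset.Icc 2 N : Set ℕ) := fun k hk l hl hkl => by
    simp only [coe_Icc, Set.mem_Icc] at hk hl
    simp only at hkl
    omega
  obtain rfl : s = s' := by
    rcases le_total s s' with h | h
    · exact Nat.eq_of_mul_sum_pow_add_eq hw hj hi hi' hs' h heq
    · exact (Nat.eq_of_mul_sum_pow_add_eq hw hj hi' hi hs h heq.symm).symm
  exact ⟨rfl, Nat.eq_of_sum_mul_pow_eq (hw.mono (by simp)) hi hi' (by omega)⟩
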